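/- For 0 < q < 1, p > -1, 0 < α < 1, x > 0, and f such that all integrals converge, the generalized q-fractional derivative is a left inverse of the generalized q-fractional integral: D^α_{p,q}(J^α_{p,q} f)(x) = f(x), where D^α_{p,q} g(x) = (x^{-p} D_q)(J^{1-α}_{p,q} g)(x). -/

import Mathlib

open scoped BigOperators

/-- Jackson q-integral ∫₀^b f d_q = (1-q) b ∑ q^i f(q^i b). -/
noncomputable def jackson (q b : ℝ) (f : ℝ → ℝ) : ℝ :=
  (1 - q) * b * ∑' i : ℕ, q ^ i * f (q ^ i * b)

/-- Jackson q-integral ∫_a^b. -/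
noncomputable def jacksonI (q a b : ℝ) (f : ℝ → ℝ) : ℝ :=
  jackson q b f - jackson q a f

/-- q-number [a]_q = (1-q^a)/(1-q). -/
noncomputable def qNum (q a : ℝ) : ℝ := (1 - q ^ a) / (1 - q)

/-- infinite q-Pochhammer (a;q)_∞. -/
noncomputable def qPochInf (a q : ℝ) : ℝ := ∏' j : ℕ, (1 - a * q ^ j)

/-- q-Gamma function Γ_q(t) = ((q;q)_∞/(q^t;q)_∞)(1-q)^{1-t}. -/
noncomputable def qGamma (q t : ℝ) : ℝ :=
  (qPochInf q q / qPochInf (q ^ t) q) * (1 - q) ^ (1 - t)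

/-- q-exponential E_q(z) = ∏ (1 + (1-q) q^k z). -/
noncomputable def qExpE (q z : ℝ) : ℝ := ∏' k : ℕ, (1 + (1 - q) * q ^ k * z)

/-- generalized Q-power (x - y)^{(γ)}_Q = x^γ (y/x;Q)_∞ / (Q^γ y/x;Q)_∞. -/
noncomputable def genPow (Q x y γ : ℝ) : ℝ :=
  x ^ γ * (qPochInf (y / x) Q / qPochInf (Q ^ γ * (y / x)) Q)

/-- q-derivative D_q h(x) = (h(x)-h(qx))/((1-q)x). -/
noncomputable def qDeriv (q : ℝ) (h : ℝ → ℝ) (x : ℝ) : ℝ :=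
  (h x - h (q * x)) / ((1 - q) * x)

/-- generalized q-fractional integral J^α_{p,q}. -/
noncomputable def Jfrac (q p α : ℝ) (f : ℝ → ℝ) (x : ℝ) : ℝ :=
  ((qNum q (p + 1)) ^ (1 - α) / qGamma (q ^ (p + 1)) α) *
    jackson q x (fun w => w ^ p * f w *
      genPow (q ^ (p + 1)) (x ^ (p + 1)) ((w * q) ^ (p + 1)) (α - 1))

/-- generalized q-fractional derivative for 0 < α < 1 : D^α g = (x^{-p} D_q)(J^{1-α} g). -/
noncomputable def Dfrac (q p α : ℝ) (g : ℝ → ℝ) (x : ℝ) : ℝ :=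
  x ^ (-p) * qDeriv q (fun y => Jfrac q p (1 - α) g y) x


/-! With `Q = q^(p+1)`, the infinite Q-Pochhammer quotients in the generalized power collapse to
finite ones, so the Jackson sum defining `J^β f (y)` becomes
`(1-q)^β y^((p+1)β) ∑ₙ (Q^β;Q)ₙ/(Q;Q)ₙ Qⁿ f(qⁿy)`. Composing `J^(1-α)` with `J^α` and collecting
the absolutely convergent double series along antidiagonals, the coefficient of `Qⁿ f(qⁿy)` is a
q-Vandermonde convolution equal to `1`, so `J^(1-α) (J^α f) (y) = ∫₀^y w^p f(w) d_q w`. The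
q-derivative inverts the Jackson integral, and `x^(-p)` cancels the weight `x^p`. -/

open Finset

section qPochInf

variable {Q a : ℝ}

lemma one_sub_mul_pow_pos (hQ0 : 0 ≤ Q) (hQ1 : Q ≤ 1) (ha : a < 1) (k : ℕ) :
    0 < 1 - a * Q ^ k := by
  rcases le_or_gt a 0 with ha0 | ha0
  · nlinarith [pow_nonneg hQ0 k]
  · nlinarith [pow_le_one₀ hQ0 hQ1 (n := k)]

lemma summable_log_one_sub_mul_pow (hQ0 : 0 ≤ Q) (hQ1 : Q < 1) :
    Summable fun k : ℕ => Real.log (1 - a * Q ^ k) := by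
  simpa [sub_eq_add_neg] using Real.summable_log_one_add_of_summable
    ((summable_geometric_of_lt_one hQ0 hQ1).mul_left (-a))

lemma qPochInf_eq_exp (hQ0 : 0 ≤ Q) (hQ1 : Q < 1) (ha : a < 1) :
    qPochInf a Q = Real.exp (∑' k : ℕ, Real.log (1 - a * Q ^ k)) :=
  (Real.rexp_tsum_eq_tprod (one_sub_mul_pow_pos hQ0 hQ1.le ha)
    (summable_log_one_sub_mul_pow hQ0 hQ1)).symm

lemma qPochInf_pos (hQ0 : 0 ≤ Q) (hQ1 : Q < 1) (ha : a < 1) : 0 < qPochInf a Q := by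
  rw [qPochInf_eq_exp hQ0 hQ1 ha]
  exact Real.exp_pos _

lemma qPochInf_le_one (hQ0 : 0 ≤ Q) (hQ1 : Q < 1) (ha0 : 0 ≤ a) (ha1 : a < 1) :
    qPochInf a Q ≤ 1 := by
  rw [qPochInf_eq_exp hQ0 hQ1 ha1, Real.exp_le_one_iff]
  refine tsum_nonpos fun k => Real.log_nonpos (one_sub_mul_pow_pos hQ0 hQ1.le ha1 k).le ?_
  nlinarith [mul_nonneg ha0 (pow_nonneg hQ0 k)]

lemma prod_range_mul_qPochInf (hQ0 : 0 ≤ Q) (hQ1 : Q < 1) (ha : a < 1) (m : ℕ) :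
    (∏ k ∈ range m, (1 - a * Q ^ k)) * qPochInf (a * Q ^ m) Q = qPochInf a Q := by
  have hlog : Summable fun k : ℕ => Real.log (1 - a * Q ^ (k + m)) :=
    (summable_nat_add_iff (f := fun k : ℕ => Real.log (1 - a * Q ^ k)) m).mpr
      (summable_log_one_sub_mul_pow hQ0 hQ1)
  have hmul : Multipliable fun k : ℕ => 1 - a * Q ^ (k + m) :=
    Real.multipliable_of_summable_log (fun k => one_sub_mul_pow_pos hQ0 hQ1.le ha _) hlog
  have h := Multipliable.prod_mul_tprod_nat_mul' (f := fun k : ℕ => 1 - a * Q ^ k) hmul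
  rw [qPochInf, qPochInf, ← h]
  congr 2 with k
  ring

end qPochInf

/-- `(a;Q)_n / (Q;Q)_n`, the `n`-th coefficient of the q-binomial series `(az;Q)_∞ / (z;Q)_∞`. -/
noncomputable def qBinomCoeff (Q a : ℝ) (n : ℕ) : ℝ :=
  ∏ k ∈ range n, (1 - a * Q ^ k) / (1 - Q ^ (k + 1))

section qBinomCoeff

variable {Q a : ℝ}

@[simp] lemma qBinomCoeff_zero : qBinomCoeff Q a 0 = 1 := rfl

lemma qBinomCoeff_succ (n : ℕ) :
    qBinomCoeff Q a (n + 1) = qBinomCoeff Q a n * ((1 - a * Q ^ n) / (1 - Q ^ (n + 1))) :=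
  prod_range_succ _ _

/-- The coefficient of `z ^ n` in `(Qz;Q)_∞ / (sz;Q)_∞ * (sz;Q)_∞ / (z;Q)_∞ = 1 / (1 - z)`. -/
lemma qBinomCoeff_convolution_eq_one {s : ℝ} (hQ : ∀ k : ℕ, 1 - Q ^ (k + 1) ≠ 0) (hs : s ≠ 0)
    (n : ℕ) :
    ∑ c ∈ antidiagonal n, s ^ c.1 * qBinomCoeff Q (Q / s) c.1 * qBinomCoeff Q s c.2 = 1 := by
  rw [Nat.sum_antidiagonal_eq_sum_range_succ
    (fun j m => s ^ j * qBinomCoeff Q (Q / s) j * qBinomCoeff Q s m)]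
  set F : ℕ → ℕ → ℝ := fun j m => s ^ j * qBinomCoeff Q (Q / s) j * qBinomCoeff Q s m
  -- a certificate making `F j (m + 1) - F j m` telescope in `j`
  set w : ℕ → ℕ → ℝ := fun j m => F j m * Q ^ m * (1 - Q ^ j) / (1 - Q ^ (j + m))
  have step (j m : ℕ) : F j (m + 1) = F j m + (w j (m + 1) - w (j + 1) m) := by
    have h := hQ (j + m)
    have hj := hQ j
    have hm := hQ m
    simp only [F, w, qBinomCoeff_succ, show j + (m + 1) = j + m + 1 by ring,
      show j + 1 + m = j + m + 1 by ring]
    field_simp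
    ring
  induction n with
  | zero => simp
  | succ n ih =>
    have hstep : ∀ j ∈ range (n + 1), F j (n + 1 - j)
        = F j (n - j) + (w j (n + 1 - j) - w (j + 1) (n + 1 - (j + 1))) := by
      intro j hj
      rw [Nat.sub_add_comm (mem_range_succ_iff.mp hj), step, Nat.add_sub_add_right]
    rw [sum_range_succ, sum_congr rfl hstep, sum_add_distrib, ih,
      sum_range_sub' (fun j => w j (n + 1 - j))]
    have := hQ n
    simp only [F, w, tsub_zero, tsub_self, pow_zero, qBinomCoeff_zero, mul_one, one_mul,
      sub_self, mul_zero, zero_div, zero_sub, add_zero, zero_add]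
    field_simp
    ring

lemma qBinomCoeff_eq_div (n : ℕ) :
    qBinomCoeff Q a n = (∏ k ∈ range n, (1 - a * Q ^ k)) / ∏ k ∈ range n, (1 - Q * Q ^ k) := by
  simp only [qBinomCoeff, prod_div_distrib, pow_succ']

lemma qPochInf_mul_pow_div (hQ0 : 0 ≤ Q) (hQ1 : Q < 1) (ha : a < 1) (n : ℕ) :
    qPochInf (Q * Q ^ n) Q / qPochInf (a * Q ^ n) Q
      = qPochInf Q Q / qPochInf a Q * qBinomCoeff Q a n := by
  rw [qBinomCoeff_eq_div, ← prod_range_mul_qPochInf hQ0 hQ1 hQ1 n,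
    ← prod_range_mul_qPochInf hQ0 hQ1 ha n]
  have hnum := prod_pos fun k (_ : k ∈ range n) => one_sub_mul_pow_pos hQ0 hQ1.le ha k
  have hden := prod_pos fun k (_ : k ∈ range n) => one_sub_mul_pow_pos hQ0 hQ1.le hQ1 k
  have hQn := qPochInf_pos hQ0 hQ1 (a := Q * Q ^ n) (by nlinarith [pow_le_one₀ hQ0 hQ1.le (n := n)])
  have han := qPochInf_pos hQ0 hQ1 (a := a * Q ^ n)
    (by nlinarith [one_sub_mul_pow_pos hQ0 hQ1.le ha n])
  field_simp

lemma qBinomCoeff_nonneg (hQ0 : 0 ≤ Q) (hQ1 : Q < 1) (ha : a < 1) (n : ℕ) :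
    0 ≤ qBinomCoeff Q a n := by
  rw [qBinomCoeff_eq_div]
  exact div_nonneg (prod_nonneg fun k _ => (one_sub_mul_pow_pos hQ0 hQ1.le ha k).le)
    (prod_nonneg fun k _ => (one_sub_mul_pow_pos hQ0 hQ1.le hQ1 k).le)

lemma qBinomCoeff_le_inv_qPochInf (hQ0 : 0 ≤ Q) (hQ1 : Q < 1) (ha0 : 0 ≤ a) (ha1 : a < 1)
    (n : ℕ) : qBinomCoeff Q a n ≤ (qPochInf Q Q)⁻¹ := by
  have hnum : ∏ k ∈ range n, (1 - a * Q ^ k) ≤ 1 :=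
    prod_le_one (fun k _ => (one_sub_mul_pow_pos hQ0 hQ1.le ha1 k).le)
      fun k _ => by nlinarith [mul_nonneg ha0 (pow_nonneg hQ0 k)]
  have hden : qPochInf Q Q ≤ ∏ k ∈ range n, (1 - Q * Q ^ k) := by
    rw [← prod_range_mul_qPochInf hQ0 hQ1 hQ1 n]
    exact mul_le_of_le_one_right (prod_nonneg fun k _ => (one_sub_mul_pow_pos hQ0 hQ1.le hQ1 k).le)
      (qPochInf_le_one hQ0 hQ1 (by positivity) (by nlinarith [pow_le_one₀ hQ0 hQ1.le (n := n)]))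
  rw [qBinomCoeff_eq_div]
  calc (∏ k ∈ range n, (1 - a * Q ^ k)) / ∏ k ∈ range n, (1 - Q * Q ^ k)
      ≤ 1 / ∏ k ∈ range n, (1 - Q * Q ^ k) := by
        gcongr
        exact prod_nonneg fun k _ => (one_sub_mul_pow_pos hQ0 hQ1.le hQ1 k).le
    _ ≤ (qPochInf Q Q)⁻¹ := by
        rw [one_div]
        exact inv_anti₀ (qPochInf_pos hQ0 hQ1 hQ1) hden

end qBinomCoeff

lemma genPow_mul_self {Q X : ℝ} (r γ : ℝ) (hX : X ≠ 0) :
    genPow Q X (r * X) γ = X ^ γ * (qPochInf r Q / qPochInf (Q ^ γ * r) Q) := by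
  rw [genPow, mul_div_cancel_right₀ r hX]

lemma Jfrac_eq_tsum (f : ℝ → ℝ) {q p β y : ℝ} (hq0 : 0 < q) (hq1 : q < 1) (hp : -1 < p)
    (hβ : 0 < β) (hy : 0 < y) :
    Jfrac q p β f y = (1 - q) ^ β * y ^ ((p + 1) * β) *
      ∑' n : ℕ, qBinomCoeff (q ^ (p + 1)) ((q ^ (p + 1)) ^ β) n * (q ^ (p + 1)) ^ n
        * f (q ^ n * y) := by
  set Q := q ^ (p + 1) with hQ
  have hQ0 : 0 < Q := Real.rpow_pos_of_pos hq0 _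
  have hQ1 : Q < 1 := Real.rpow_lt_one hq0.le hq1 (by linarith)
  have hQβ : Q ^ β < 1 := Real.rpow_lt_one hQ0.le hQ1 hβ
  have hyp : 0 < y ^ (p + 1) := Real.rpow_pos_of_pos hy _
  have hterm (n : ℕ) :
      q ^ n * ((q ^ n * y) ^ p * f (q ^ n * y)
        * genPow Q (y ^ (p + 1)) ((q ^ n * y * q) ^ (p + 1)) (β - 1))
      = (y ^ p * (y ^ (p + 1)) ^ (β - 1) * (qPochInf Q Q / qPochInf (Q ^ β) Q))
        * (qBinomCoeff Q (Q ^ β) n * Q ^ n * f (q ^ n * y)) := by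
    have hqn : q ^ n * (q ^ n) ^ p = Q ^ n := by
      rw [← Real.rpow_pow_comm hq0.le, ← mul_pow, hQ, Real.rpow_add_one hq0.ne', mul_comm]
    have hpow : (q ^ n * y * q) ^ (p + 1) = Q * Q ^ n * y ^ (p + 1) := by
      rw [mul_right_comm, Real.mul_rpow (by positivity) hy.le, ← pow_succ,
        ← Real.rpow_pow_comm hq0.le, pow_succ']
    have hshift : Q ^ (β - 1) * (Q * Q ^ n) = Q ^ β * Q ^ n := by
      rw [Real.rpow_sub_one hQ0.ne']
      field_simp
    rw [hpow, genPow_mul_self _ _ hyp.ne', hshift, qPochInf_mul_pow_div hQ0.le hQ1 hQβ,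
      Real.mul_rpow (by positivity) hy.le, ← hqn]
    ring
  have hconst : qNum q (p + 1) ^ (1 - β) / qGamma Q β * (1 - q)
      * (qPochInf Q Q / qPochInf (Q ^ β) Q) = (1 - q) ^ β := by
    have hq1' : 0 < 1 - q := by linarith
    have hQ1' : 0 < 1 - Q := by linarith
    have hPQ := qPochInf_pos hQ0.le hQ1 hQ1
    have hPβ := qPochInf_pos hQ0.le hQ1 hQβ
    have hβpow : (1 - q) ^ (1 - β) = (1 - q) / (1 - q) ^ β := by
      rw [Real.rpow_sub hq1', Real.rpow_one]
    rw [qNum, qGamma, ← hQ, Real.div_rpow hQ1'.le hq1'.le, hβpow]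
    have := Real.rpow_pos_of_pos hQ1' (1 - β)
    have := Real.rpow_pos_of_pos hq1' β
    field_simp
  have hy_pow : y * (y ^ p * (y ^ (p + 1)) ^ (β - 1)) = y ^ ((p + 1) * β) := by
    rw [← mul_assoc, mul_comm y, ← Real.rpow_add_one hy.ne', ← Real.rpow_mul hy.le,
      ← Real.rpow_add hy]
    ring_nf
  rw [Jfrac, jackson, tsum_congr hterm, tsum_mul_left, ← hconst, ← hy_pow]
  ring

lemma Summable.tsum_eq_tsum_sum_antidiagonal {E : Type*} [AddCommMonoid E] [TopologicalSpace E]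
    [ContinuousAdd E] [T3Space E] {T : ℕ × ℕ → E} (hT : Summable T) :
    ∑' c, T c = ∑' n, ∑ c ∈ antidiagonal n, T c := by
  conv_rhs => congr; ext; rw [← Finset.sum_finset_coe, ← tsum_fintype (L := .unconditional _)]
  rw [← HasAntidiagonal.sigmaAntidiagonalEquivProd.tsum_eq T]
  exact (HasAntidiagonal.sigmaAntidiagonalEquivProd.summable_iff.mpr hT).tsum_sigma'
    fun _ => (hasSum_fintype _).summable

lemma pow_mul_rpow_mul {q y : ℝ} (p a : ℝ) (hq0 : 0 < q) (hy : 0 < y) (n : ℕ) :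
    q ^ n * ((q ^ n * y) ^ p * a) = y ^ p * ((q ^ (p + 1)) ^ n * a) := by
  rw [Real.mul_rpow (by positivity) hy.le, Real.rpow_pow_comm hq0.le,
    Real.rpow_add_one (pow_ne_zero n hq0.ne')]
  ring

lemma jackson_rpow_mul (f : ℝ → ℝ) {q p y : ℝ} (hq0 : 0 < q) (hy : 0 < y) :
    jackson q y (fun w => w ^ p * f w)
      = (1 - q) * y ^ (p + 1) * ∑' n : ℕ, (q ^ (p + 1)) ^ n * f (q ^ n * y) := by
  rw [jackson, tsum_congr fun n => pow_mul_rpow_mul p _ hq0 hy n, tsum_mul_left,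
    Real.rpow_add_one hy.ne']
  ring

lemma qDeriv_jackson {q x : ℝ} {g : ℝ → ℝ} (hq : q ≠ 1) (hx : x ≠ 0)
    (hg : Summable fun n : ℕ => q ^ n * g (q ^ n * x)) :
    qDeriv q (fun y => jackson q y g) x = g x := by
  have hshift : q * ∑' n : ℕ, q ^ n * g (q ^ n * (q * x))
      = ∑' n : ℕ, q ^ (n + 1) * g (q ^ (n + 1) * x) := by
    rw [← tsum_mul_left]
    congr 1 with n
    rw [pow_succ, mul_assoc (q ^ n) q x]
    ring
  have hq' : 1 - q ≠ 0 := sub_ne_zero.mpr hq.symm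
  rw [qDeriv, jackson, jackson, hg.tsum_eq_zero_add, div_eq_iff (mul_ne_zero hq' hx)]
  simp only [pow_zero, one_mul]
  linear_combination (-(1 - q) * x) * hshift

lemma Jfrac_one_sub_Jfrac (f : ℝ → ℝ) {q p α y C : ℝ} (hq0 : 0 < q) (hq1 : q < 1)
    (hp : -1 < p) (hα0 : 0 < α) (hα1 : α < 1) (hy : 0 < y)
    (hC : ∀ z ∈ Set.Ioc 0 y, |f z| ≤ C) :
    Jfrac q p (1 - α) (Jfrac q p α f) y = jackson q y (fun w => w ^ p * f w) := by
  set Q := q ^ (p + 1) with hQ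
  have hQ0 : 0 < Q := Real.rpow_pos_of_pos hq0 _
  have hQ1 : Q < 1 := Real.rpow_lt_one hq0.le hq1 (by linarith)
  set s := Q ^ α with hs
  set t := Q ^ (1 - α)
  have hs0 : 0 < s := Real.rpow_pos_of_pos hQ0 _
  have hs1 : s < 1 := Real.rpow_lt_one hQ0.le hQ1 hα0
  have ht1 : t < 1 := Real.rpow_lt_one hQ0.le hQ1 (by linarith)
  have hts : t = Q / s := by
    show Q ^ (1 - α) = Q / Q ^ α
    rw [Real.rpow_sub hQ0, Real.rpow_one]
  have hfq (n : ℕ) : |f (q ^ n * y)| ≤ C :=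
    hC _ ⟨by positivity, mul_le_of_le_one_left hy.le (pow_le_one₀ hq0.le hq1.le)⟩
  set T : ℕ × ℕ → ℝ := fun c => (s * Q) ^ c.1 * qBinomCoeff Q t c.1
    * (qBinomCoeff Q s c.2 * Q ^ c.2 * f (q ^ (c.2 + c.1) * y))
  have hT : Summable T := by
    set P := (qPochInf Q Q)⁻¹
    refine Summable.of_norm_bounded (g := fun c => (P * P * C) * ((s * Q) ^ c.1 * Q ^ c.2))
      (((summable_geometric_of_lt_one (by positivity) (by nlinarith)).mul_of_nonneg
        (summable_geometric_of_lt_one hQ0.le hQ1) (fun _ => by positivity)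
        (fun _ => by positivity)).mul_left _) fun c => ?_
    have hP : 0 ≤ P := inv_nonneg.mpr (qPochInf_pos hQ0.le hQ1 hQ1).le
    have hct := qBinomCoeff_nonneg hQ0.le hQ1 ht1 c.1
    have hcs := qBinomCoeff_nonneg hQ0.le hQ1 hs1 c.2
    have hct_le := qBinomCoeff_le_inv_qPochInf hQ0.le hQ1 (by positivity) ht1 c.1
    have hcs_le := qBinomCoeff_le_inv_qPochInf hQ0.le hQ1 hs0.le hs1 c.2
    rw [Real.norm_eq_abs, abs_mul, abs_mul, abs_mul, abs_mul, abs_of_nonneg (by positivity),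
      abs_of_nonneg hct, abs_of_nonneg hcs, abs_of_nonneg (by positivity)]
    calc (s * Q) ^ c.1 * qBinomCoeff Q t c.1
          * (qBinomCoeff Q s c.2 * Q ^ c.2 * |f (q ^ (c.2 + c.1) * y)|)
        ≤ (s * Q) ^ c.1 * P * (P * Q ^ c.2 * C) :=
          mul_le_mul (mul_le_mul_of_nonneg_left hct_le (by positivity))
            (mul_le_mul (mul_le_mul_of_nonneg_right hcs_le (by positivity)) (hfq _)
              (abs_nonneg _) (mul_nonneg hP (by positivity)))
            (by positivity) (mul_nonneg (by positivity) hP)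
      _ = P * P * C * ((s * Q) ^ c.1 * Q ^ c.2) := by ring
  have hinner (j : ℕ) : qBinomCoeff Q t j * Q ^ j * Jfrac q p α f (q ^ j * y)
      = (1 - q) ^ α * y ^ ((p + 1) * α) * ∑' i, T (j, i) := by
    have hpow : (q ^ j * y) ^ ((p + 1) * α) = s ^ j * y ^ ((p + 1) * α) := by
      rw [Real.mul_rpow (by positivity) hy.le, ← Real.rpow_pow_comm hq0.le, Real.rpow_mul hq0.le]
    have hshift (i : ℕ) : q ^ i * (q ^ j * y) = q ^ (i + j) * y := by ring
    simp only [T]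
    rw [Jfrac_eq_tsum f hq0 hq1 hp hα0 (by positivity), hpow, tsum_mul_left]
    simp only [hshift, ← hQ, ← hs]
    ring
  have hdiag (n : ℕ) : ∑ c ∈ antidiagonal n, T c = Q ^ n * f (q ^ n * y) := by
    have hterm : ∀ c ∈ antidiagonal n, T c = s ^ c.1 * qBinomCoeff Q (Q / s) c.1
        * qBinomCoeff Q s c.2 * (Q ^ n * f (q ^ n * y)) := by
      rintro ⟨i, j⟩ hc
      rw [HasAntidiagonal.mem_antidiagonal] at hc
      subst hc
      simp only [T, hts, add_comm j i, pow_add Q, mul_pow]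
      ring
    have hQ' (k : ℕ) : 1 - Q ^ (k + 1) ≠ 0 :=
      (sub_pos.mpr (pow_lt_one₀ hQ0.le hQ1 k.succ_ne_zero)).ne'
    rw [sum_congr rfl hterm, ← sum_mul, qBinomCoeff_convolution_eq_one hQ' hs0.ne', one_mul]
  rw [jackson_rpow_mul f hq0 hy, Jfrac_eq_tsum _ hq0 hq1 hp (by linarith) hy, tsum_congr hinner,
    tsum_mul_left, ← hT.tsum_prod' hT.prod_factor, hT.tsum_eq_tsum_sum_antidiagonal,
    tsum_congr hdiag]
  have hq1' : 0 < 1 - q := by linarith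
  calc (1 - q) ^ (1 - α) * y ^ ((p + 1) * (1 - α))
        * ((1 - q) ^ α * y ^ ((p + 1) * α) * ∑' n, Q ^ n * f (q ^ n * y))
      = (1 - q) ^ (1 - α + α) * y ^ ((p + 1) * (1 - α) + (p + 1) * α)
        * ∑' n, Q ^ n * f (q ^ n * y) := by
        rw [Real.rpow_add hq1', Real.rpow_add hy]
        ring
    _ = _ := by rw [sub_add_cancel, Real.rpow_one, ← mul_add, sub_add_cancel, mul_one]

theorem Dfrac_left_inverse (q p α x : ℝ) (f : ℝ → ℝ)
    (hq0 : 0 < q) (hq1 : q < 1) (hp : -1 < p) (hα0 : 0 < α) (hα1 : α < 1) (hx : 0 < x)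
    (hbd : ∃ C : ℝ, ∀ y ∈ Set.Ioc (0 : ℝ) x, |f y| ≤ C) :
    Dfrac q p α (fun y => Jfrac q p α f y) x = f x := by
  obtain ⟨C, hC⟩ := hbd
  have hqx : q * x ≤ x := mul_le_of_le_one_left hx.le hq1.le
  have hJJ : qDeriv q (fun y => Jfrac q p (1 - α) (fun y => Jfrac q p α f y) y) x
      = qDeriv q (fun y => jackson q y (fun w => w ^ p * f w)) x := by
    rw [qDeriv, qDeriv, Jfrac_one_sub_Jfrac f hq0 hq1 hp hα0 hα1 hx hC,
      Jfrac_one_sub_Jfrac f hq0 hq1 hp hα0 hα1 (by positivity)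
        fun z hz => hC z ⟨hz.1, hz.2.trans hqx⟩]
  have hgeom : Summable fun n : ℕ => (q ^ (p + 1)) ^ n * f (q ^ n * x) := by
    have hQ1 : q ^ (p + 1) < 1 := Real.rpow_lt_one hq0.le hq1 (by linarith)
    refine Summable.of_norm_bounded
      ((summable_geometric_of_lt_one (by positivity) hQ1).mul_left C) fun n => ?_
    rw [norm_mul, Real.norm_of_nonneg (by positivity), mul_comm C]
    exact mul_le_mul_of_nonneg_left (hC _ ⟨by positivity,
      mul_le_of_le_one_left hx.le (pow_le_one₀ hq0.le hq1.le)⟩) (by positivity)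
  have hsum : Summable fun n : ℕ => q ^ n * ((q ^ n * x) ^ p * f (q ^ n * x)) :=
    (hgeom.mul_left (x ^ p)).congr fun n => (pow_mul_rpow_mul p _ hq0 hx n).symm
  rw [Dfrac, hJJ, qDeriv_jackson (g := fun w => w ^ p * f w) hq1.ne hx.ne' hsum, ← mul_assoc,
    ← Real.rpow_add hx, neg_add_cancel, Real.rpow_zero, one_mul]
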